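/- arXiv:math/0510195 — 2 statements merged into one kernel-verified Lean document; each statement's English description precedes it below -/
import Mathlib

section
/- Let f : ℕ → ℕ be a function. Suppose there exist constants C > 0, N > 0, and α ∈ (0,1) such that for every natural number n > N there exist k ∈ ℕ and n_1, …, n_k ∈ ℕ satisfying: (a) k ≤ C·ln n; (b) f(n) ≤ Σ_{i=1}^k f(n_i); (c) n ≤ Σ_{i=1}^k n_i ≤ n + C·ln n; (d) n_i ≤ α·n for every i = 1, …, k. Then f is bounded above by a linear function, i.e., there exist constants A, B such that f(n) ≤ A·n + B for all n ∈ ℕ. -/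
set_option maxHeartbeats 1000000 in
/-- If `f : ℕ → ℕ` satisfies the subdivision conditions (a)–(d), then `f` is bounded above by
a linear function. -/
theorem statement14 (f : ℕ → ℕ)
    (h : ∃ (C N : ℝ) (α : ℝ), 0 < C ∧ 0 < N ∧ α ∈ Set.Ioo (0 : ℝ) 1 ∧
      ∀ n : ℕ, (n : ℝ) > N → ∃ (k : ℕ) (ns : Fin k → ℕ),
        (k : ℝ) ≤ C * Real.log n ∧
        f n ≤ ∑ i, f (ns i) ∧
        n ≤ ∑ i, ns i ∧ ((∑ i, ns i : ℕ) : ℝ) ≤ n + C * Real.log n ∧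
        ∀ i, (ns i : ℝ) ≤ α * n) :
    ∃ A B : ℝ, ∀ n : ℕ, (f n : ℝ) ≤ A * n + B := by
  obtain ⟨C, N, α, hC, hN, ⟨hα0, hα1⟩, hsub⟩ := h
  have hsα0 : 0 < Real.sqrt α := Real.sqrt_pos.mpr hα0
  have hsα1 : Real.sqrt α < 1 := by
    nlinarith [Real.sq_sqrt hα0.le, Real.sqrt_nonneg α]
  set γ : ℝ := 1 / Real.sqrt α - 1 with hγdef
  have hγ : 0 < γ := by
    have : 1 < 1 / Real.sqrt α := (one_lt_div hsα0).mpr hsα1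
    simp only [hγdef]; linarith
  set N₁ : ℝ := (8 * C / γ) ^ 4 with hN₁def
  set M : ℕ := ⌈max N N₁⌉₊ with hMdef
  set F : ℕ := (Finset.range (M + 1)).sup f with hFdef
  set A : ℝ := 2 * ((F : ℝ) + 1) with hAdef
  have hA : 0 < A := by positivity
  have key : ∀ n : ℕ, (f n : ℝ) ≤ A * ((n : ℝ) + 1 - Real.sqrt n) := by
    intro n
    induction n using Nat.strong_induction_on with
    | _ n ih =>
    have hsq2 : Real.sqrt n ≤ ((n : ℝ) + 1) / 2 := by
      rw [show ((n:ℝ)+1)/2 = Real.sqrt ((((n:ℝ)+1)/2)^2) by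
        rw [Real.sqrt_sq (by positivity)]]
      apply Real.sqrt_le_sqrt
      nlinarith [sq_nonneg ((n:ℝ) - 1)]
    by_cases hn : n ≤ M
    · -- base case
      have h1 : f n ≤ F :=
        Finset.le_sup (Finset.mem_range.mpr (Nat.lt_succ_of_le hn))
      have h1' : (f n : ℝ) ≤ (F : ℝ) := by exact_mod_cast h1
      nlinarith [Nat.cast_nonneg (α := ℝ) n]
    · -- inductive step
      push_neg at hn
      have hMge : max N N₁ ≤ (M : ℝ) := Nat.le_ceil _
      have hnM : (M : ℝ) < (n : ℝ) := by exact_mod_cast hn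
      have hnN : (n : ℝ) > N := lt_of_le_of_lt ((le_max_left N N₁).trans hMge) hnM
      have hnN₁ : N₁ ≤ (n : ℝ) := ((le_max_right N N₁).trans hMge).trans hnM.le
      have hn0 : (0 : ℝ) < n := lt_trans hN hnN
      obtain ⟨k, ns, hk, hf, hS1, hS2, hbound⟩ := hsub n hnN
      have hlt : ∀ i, ns i < n := by
        intro i
        have : (ns i : ℝ) < n := lt_of_le_of_lt (hbound i) (by nlinarith)
        exact_mod_cast this
      set S : ℝ := ∑ i, (ns i : ℝ) with hSdef
      have hScast : S = ((∑ i, ns i : ℕ) : ℝ) := by push_cast [hSdef]; ring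
      have hSlo : (n : ℝ) ≤ S := by rw [hScast]; exact_mod_cast hS1
      have hShi : S ≤ (n : ℝ) + C * Real.log n := by rw [hScast]; exact hS2
      set T : ℝ := ∑ i, Real.sqrt (ns i) with hTdef
      -- lower bound on T
      have hT : Real.sqrt n / Real.sqrt α ≤ T := by
        have hterm : ∀ i, (ns i : ℝ) / Real.sqrt (α * n) ≤ Real.sqrt (ns i) := by
          intro i
          have h1 : Real.sqrt (ns i) ≤ Real.sqrt (α * n) :=
            Real.sqrt_le_sqrt (hbound i)
          have h2 : Real.sqrt (ns i) * Real.sqrt (ns i) = (ns i : ℝ) :=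
            Real.mul_self_sqrt (Nat.cast_nonneg _)
          have h3 : 0 < Real.sqrt (α * n) := Real.sqrt_pos.mpr (by positivity)
          rw [div_le_iff₀ h3]
          nlinarith [Real.sqrt_nonneg ((ns i : ℕ) : ℝ)]
        have hsum : S / Real.sqrt (α * n) ≤ T := by
          rw [hSdef, hTdef, Finset.sum_div]
          exact Finset.sum_le_sum fun i _ => hterm i
        have h4 : Real.sqrt n / Real.sqrt α ≤ S / Real.sqrt (α * n) := by
          rw [Real.sqrt_mul hα0.le, div_le_div_iff₀ hsα0 (by positivity)]
          have h5 : Real.sqrt n * Real.sqrt n = (n : ℝ) :=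
            Real.mul_self_sqrt (Nat.cast_nonneg _)
          nlinarith [Real.sqrt_nonneg ((n : ℕ) : ℝ)]
        linarith
      -- log bound: 2 C log n ≤ γ √n
      have hlogb : 2 * C * Real.log n ≤ γ * Real.sqrt n := by
        set t : ℝ := Real.sqrt (Real.sqrt n) with htdef
        have ht0 : 0 ≤ t := Real.sqrt_nonneg _
        have ht2 : t * t = Real.sqrt n := Real.mul_self_sqrt (Real.sqrt_nonneg _)
        have htpos : 0 < t := Real.sqrt_pos.mpr (Real.sqrt_pos.mpr hn0)
        have hlog4 : Real.log n = 4 * Real.log t := by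
          rw [htdef, Real.log_sqrt (Real.sqrt_nonneg _), Real.log_sqrt (Nat.cast_nonneg _)]
          ring
        have hlogt : Real.log t ≤ t := (Real.log_le_sub_one_of_pos htpos).trans (by linarith)
        have htlarge : 8 * C / γ ≤ t := by
          have h7 : Real.sqrt (Real.sqrt N₁) = 8 * C / γ := by
            rw [hN₁def, show (8*C/γ)^4 = ((8*C/γ)^2)^2 by ring,
              Real.sqrt_sq (by positivity), Real.sqrt_sq (by positivity)]
          rw [htdef, ← h7]
          exact Real.sqrt_le_sqrt (Real.sqrt_le_sqrt hnN₁)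
        have hCt : 8 * C ≤ γ * t := by
          rw [div_le_iff₀ hγ] at htlarge
          nlinarith
        have hstep : 8 * C * t ≤ γ * t * t := by nlinarith
        calc 2 * C * Real.log n = 8 * C * Real.log t := by rw [hlog4]; ring
          _ ≤ 8 * C * t := mul_le_mul_of_nonneg_left hlogt (by positivity)
          _ ≤ γ * t * t := hstep
          _ = γ * Real.sqrt n := by rw [mul_assoc, ht2]
      -- combine
      have hfsum : (f n : ℝ) ≤ ∑ i, (f (ns i) : ℝ) := by exact_mod_cast hf
      have hsum2 : ∑ i, (f (ns i) : ℝ) ≤ A * (S + k - T) := by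
        have h9 : ∑ i, (f (ns i) : ℝ) ≤ ∑ i, A * ((ns i : ℝ) + 1 - Real.sqrt (ns i)) :=
          Finset.sum_le_sum fun i _ => ih (ns i) (hlt i)
        have h10 : ∑ i, A * ((ns i : ℝ) + 1 - Real.sqrt (ns i)) = A * (S + k - T) := by
          rw [← Finset.mul_sum, hSdef, hTdef]
          congr 1
          rw [Finset.sum_sub_distrib, Finset.sum_add_distrib, Finset.sum_const,
            Finset.card_univ, Fintype.card_fin]
          ring
        linarith
      have hinner : S + k - T ≤ (n : ℝ) + 1 - Real.sqrt n := by
        have h8 : Real.sqrt n / Real.sqrt α = (1 + γ) * Real.sqrt n := by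
          rw [hγdef]; field_simp; ring
        rw [h8] at hT
        nlinarith [Real.sqrt_nonneg ((n : ℕ) : ℝ)]
      calc (f n : ℝ) ≤ A * (S + k - T) := hfsum.trans hsum2
        _ ≤ A * ((n : ℝ) + 1 - Real.sqrt n) :=
            mul_le_mul_of_nonneg_left hinner hA.le
  refine ⟨A, A, fun n => ?_⟩
  have := key n
  nlinarith [Real.sqrt_nonneg ((n : ℕ) : ℝ)]
end

section
/- For any δ ≥ 0, λ ≥ 1, c ≥ 0, there exists a constant θ = θ(δ,λ,c) with the following property: if 𝓟 = p_1…p_n is an n-gon in a δ-hyperbolic geodesic metric space all of whose sides p_1, …, p_n are (λ,c)-quasi-geodesic, then there are points u and v lying on (distinct positions along) sides of 𝓟 such that dist(u,v) ≤ 2δ(2 + log₂ n) + θ and a geodesic segment from u to v divides 𝓟 into an m_1-gon and an m_2-gon with n/4 < m_i < 3n/4 + 2 for i = 1,2. Here, if u lies on side p_a and v on side p_b, the two resulting polygons are the closed paths formed by the portion of 𝓟 from u to v together with the geodesic [v,u], and the portion of 𝓟 from v to u together with the geodesic [u,v], their sides being the geodesic segment, the (at most two) partial sides containing u and v, and the full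 sides of 𝓟 in between, so that m_1 + m_2 = n + 4 when u and v are interior to their sides. -/
universe u

section MetricCore

variable {X : Type u} [MetricSpace X]

/-- `f` restricted to `[a, b]` is a geodesic segment (a unit-speed isometric embedding). -/
def IsGeodesicSeg (f : ℝ → X) (a b : ℝ) : Prop :=
  a ≤ b ∧ ∀ s ∈ Set.Icc a b, ∀ t ∈ Set.Icc a b, dist (f s) (f t) = |s - t|

/-- `X` is a geodesic metric space. -/
def GeodesicSpace (X : Type u) [MetricSpace X] : Prop :=
  ∀ x y : X, ∃ f : ℝ → X, IsGeodesicSeg f 0 (dist x y) ∧ f 0 = x ∧ f (dist x y) = y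

/-- `X` is `δ`-hyperbolic: each side of every geodesic triangle is contained in the union of
the closed `δ`-neighborhoods of the other two sides. -/
def DeltaHyperbolic (X : Type u) [MetricSpace X] (δ : ℝ) : Prop :=
  ∀ (f g h : ℝ → X) (a b c : ℝ),
    IsGeodesicSeg f 0 a → IsGeodesicSeg g 0 b → IsGeodesicSeg h 0 c →
    f a = g 0 → g b = h 0 → h c = f 0 →
    ∀ s ∈ Set.Icc (0:ℝ) a, ∃ t,
      (t ∈ Set.Icc (0:ℝ) b ∧ dist (f s) (g t) ≤ δ) ∨
      (t ∈ Set.Icc (0:ℝ) c ∧ dist (f s) (h t) ≤ δ)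

/-- A `(λ, c)`-quasi-geodesic path of length `L`, parametrized by arc length on `[0, L]`:
every subpath has length at most `λ` times the distance between its endpoints plus `c`. -/
def QuasiGeodesicPath (lam c : ℝ) (f : ℝ → X) (L : ℝ) : Prop :=
  0 ≤ L ∧ (∀ s t : ℝ, 0 ≤ s → s ≤ t → t ≤ L → dist (f s) (f t) ≤ t - s) ∧
    ∀ s t : ℝ, 0 ≤ s → s ≤ t → t ≤ L → t - s ≤ lam * dist (f s) (f t) + c

end MetricCore


section Helpers

variable {X : Type u} [MetricSpace X] {δ lam c : ℝ}

lemma geo_rev {f : ℝ → X} {a : ℝ} (h : IsGeodesicSeg f 0 a) :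
    IsGeodesicSeg (fun u => f (a - u)) 0 a := by
  refine ⟨h.1, fun s hs t ht => ?_⟩
  have := h.2 (a - s) ⟨by linarith [hs.2], by linarith [hs.1]⟩ (a - t)
    ⟨by linarith [ht.2], by linarith [ht.1]⟩
  simpa [abs_sub_comm, sub_sub_cancel_left] using this.trans (by rw [show a - s - (a - t) = t - s by ring, abs_sub_comm])

lemma geo_lip {f : ℝ → X} {a : ℝ} (h : IsGeodesicSeg f 0 a) :
    ∀ s t : ℝ, 0 ≤ s → s ≤ t → t ≤ a → dist (f s) (f t) ≤ t - s := by
  intro s t hs hst ht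
  rw [h.2 s ⟨hs, le_trans hst ht⟩ t ⟨le_trans hs hst, ht⟩]
  rw [abs_sub_comm, abs_of_nonneg (by linarith)]

/-- two geodesics with the same endpoints are pointwise δ-close -/
lemma two_geo (hH : DeltaHyperbolic X δ) {f g : ℝ → X} {d : ℝ}
    (hf : IsGeodesicSeg f 0 d) (hg : IsGeodesicSeg g 0 d)
    (he0 : f 0 = g 0) (he1 : f d = g d) :
    ∀ r ∈ Set.Icc 0 d, ∃ t ∈ Set.Icc 0 d, dist (f r) (g t) ≤ δ := by
  intro r hr
  have hd : (0:ℝ) ≤ d := hf.1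
  have hgr := geo_rev hg
  have hconst : IsGeodesicSeg (fun _ : ℝ => g 0) 0 0 := by
    refine ⟨le_refl 0, fun s hs t ht => ?_⟩
    have hs0 : s = 0 := le_antisymm hs.2 hs.1
    have ht0 : t = 0 := le_antisymm ht.2 ht.1
    simp [hs0, ht0]
  obtain ⟨t, htc⟩ := hH f (fun u => g (d - u)) (fun _ => g 0) d d 0 hf hgr hconst
    (by simpa using he1) (by simp) (by simpa using he0.symm) r hr
  rcases htc with ⟨ht, hdist⟩ | ⟨ht, hdist⟩
  · exact ⟨d - t, ⟨by linarith [ht.2], by linarith [ht.1]⟩, hdist⟩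
  · exact ⟨0, ⟨le_refl 0, hd⟩, hdist⟩

/-- binary subdivision: a point on a geodesic is close to any path with the same endpoints -/
lemma path_near (hG : GeodesicSpace X) (hH : DeltaHyperbolic X δ) (hδ : 0 ≤ δ) :
    ∀ N : ℕ, ∀ (q : ℝ → X) (ℓ : ℝ), 0 ≤ ℓ → ℓ ≤ 2 ^ N →
    (∀ s t : ℝ, 0 ≤ s → s ≤ t → t ≤ ℓ → dist (q s) (q t) ≤ t - s) →
    ∀ f : ℝ → X, IsGeodesicSeg f 0 (dist (q 0) (q ℓ)) → f 0 = q 0 →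
      f (dist (q 0) (q ℓ)) = q ℓ →
    ∀ r ∈ Set.Icc 0 (dist (q 0) (q ℓ)),
      ∃ t ∈ Set.Icc 0 ℓ, dist (f r) (q t) ≤ δ * N + 1 := by
  intro N
  induction N with
  | zero =>
    intro q ℓ hℓ0 hℓ1 hlip f hf hf0 hf1 r hr
    refine ⟨0, ⟨le_refl 0, hℓ0⟩, ?_⟩
    have h1 : dist (f r) (f 0) = |r - 0| := hf.2 r hr 0 ⟨le_refl 0, dist_nonneg⟩
    have h2 : dist (q 0) (q ℓ) ≤ ℓ := by simpa using hlip 0 ℓ le_rfl hℓ0 le_rfl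
    rw [hf0] at h1
    rw [h1, sub_zero, abs_of_nonneg hr.1]
    simp only [pow_zero] at hℓ1
    push_cast; linarith [hr.2]
  | succ N ih =>
    intro q ℓ hℓ0 hℓ1 hlip f hf hf0 hf1 r hr
    set μ := ℓ / 2 with hμ
    have hμ0 : 0 ≤ μ := by positivity
    have hμℓ : μ ≤ ℓ := by rw [hμ]; linarith
    have hμN : μ ≤ 2 ^ N := by
      rw [hμ]; rw [pow_succ] at hℓ1; linarith
    obtain ⟨g, hg, hg0, hg1⟩ := hG (q ℓ) (q μ)
    obtain ⟨h, hh, hh0, hh1⟩ := hG (q μ) (q 0)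
    obtain ⟨t', htc⟩ := hH f g h (dist (q 0) (q ℓ)) (dist (q ℓ) (q μ)) (dist (q μ) (q 0))
      hf hg hh (by rw [hf1, hg0]) (by rw [hg1, hh0]) (by rw [hh1, hf0]) r hr
    rcases htc with ⟨ht', hdist⟩ | ⟨ht', hdist⟩
    · -- close to g, the geodesic from q ℓ to q μ ; second half of the path
      set b := dist (q ℓ) (q μ)
      have hgr : IsGeodesicSeg (fun u => g (b - u)) 0 b := geo_rev hg
      set q2 : ℝ → X := fun u => q (μ + u) with hq2
      have hq20 : q2 0 = q μ := by simp [hq2]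
      have hq21 : q2 μ = q ℓ := by simp [hq2]; congr 1; rw [hμ]; ring
      have hlip2 : ∀ s t : ℝ, 0 ≤ s → s ≤ t → t ≤ μ → dist (q2 s) (q2 t) ≤ t - s := by
        intro s t hs hst ht
        have := hlip (μ + s) (μ + t) (by linarith) (by linarith)
          (by rw [hμ] at ht ⊢; linarith)
        simpa [hq2] using this
      have hd2 : dist (q2 0) (q2 μ) = b := by rw [hq20, hq21, dist_comm]
      have hr' : b - t' ∈ Set.Icc (0:ℝ) b := ⟨by linarith [ht'.2], by linarith [ht'.1]⟩
      obtain ⟨t, ht, htd⟩ := ih q2 μ hμ0 hμN hlip2 (fun u => g (b - u))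
        (by rw [hd2]; exact hgr) (by simp [hg1, hq20]) (by rw [hd2]; simpa [hq21] using hg0)
        (b - t') (by rw [hd2]; exact hr')
      refine ⟨μ + t, ⟨by linarith [ht.1], by rw [hμ] at ht ⊢; linarith [ht.2]⟩, ?_⟩
      have : dist (f r) (q (μ + t)) ≤ dist (f r) (g t') + dist (g t') (q (μ + t)) :=
        dist_triangle _ _ _
      have he : g (b - (b - t')) = g t' := by congr 1; ring
      rw [he] at htd
      have : dist (f r) (q (μ + t)) ≤ δ + (δ * N + 1) := by
        refine le_trans this ?_
        have : dist (g t') (q (μ + t)) ≤ δ * N + 1 := by simpa [hq2] using htd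
        linarith
      refine le_trans this (by push_cast; linarith)
    · -- close to h, the geodesic from q μ to q 0 ; first half of the path
      set cc := dist (q μ) (q 0)
      have hhr : IsGeodesicSeg (fun u => h (cc - u)) 0 cc := geo_rev hh
      have hlip1 : ∀ s t : ℝ, 0 ≤ s → s ≤ t → t ≤ μ → dist (q s) (q t) ≤ t - s :=
        fun s t hs hst ht => hlip s t hs hst (le_trans ht hμℓ)
      have hd1 : dist (q 0) (q μ) = cc := dist_comm (q μ) (q 0) ▸ rfl
      have hr' : cc - t' ∈ Set.Icc (0:ℝ) cc := ⟨by linarith [ht'.2], by linarith [ht'.1]⟩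
      obtain ⟨t, ht, htd⟩ := ih q μ hμ0 hμN hlip1 (fun u => h (cc - u))
        (by rw [hd1]; exact hhr) (by simpa using hh1) (by rw [hd1]; simpa using hh0)
        (cc - t') (by rw [hd1]; exact hr')
      refine ⟨t, ⟨ht.1, le_trans ht.2 hμℓ⟩, ?_⟩
      have htr : dist (f r) (q t) ≤ dist (f r) (h t') + dist (h t') (q t) := dist_triangle _ _ _
      have he : h (cc - (cc - t')) = h t' := by congr 1; ring
      rw [he] at htd
      refine le_trans htr (by push_cast; linarith)


lemma poly_near (hG : GeodesicSpace X) (hH : DeltaHyperbolic X δ) (hδ : 0 ≤ δ) :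
    ∀ N : ℕ, ∀ m : ℕ, 1 ≤ m → m ≤ 2 ^ N → ∀ (x : ℕ → X) (q : ℕ → ℝ → X),
    (∀ i < m, IsGeodesicSeg (q i) 0 (dist (x i) (x (i+1))) ∧ q i 0 = x i ∧
      q i (dist (x i) (x (i+1))) = x (i+1)) →
    ∀ f : ℝ → X, IsGeodesicSeg f 0 (dist (x 0) (x m)) → f 0 = x 0 →
      f (dist (x 0) (x m)) = x m →
    ∀ r ∈ Set.Icc 0 (dist (x 0) (x m)),
      ∃ i, i < m ∧ ∃ t, t ∈ Set.Icc 0 (dist (x i) (x (i+1))) ∧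
        dist (f r) (q i t) ≤ δ * N + δ := by
  intro N
  induction N with
  | zero =>
    intro m hm1 hm2 x q hq f hf hf0 hf1 r hr
    simp only [pow_zero] at hm2
    have hm : m = 1 := le_antisymm hm2 hm1
    subst hm
    obtain ⟨hq1, hq10, hq11⟩ := hq 0 one_pos
    obtain ⟨t, ht, htd⟩ := two_geo hH hf hq1 (by rw [hf0, hq10]) (by rw [hf1, hq11]) r hr
    exact ⟨0, one_pos, t, ht, by simpa using htd⟩
  | succ N ih =>
    intro m hm1 hm2 x q hq f hf hf0 hf1 r hr
    rcases eq_or_lt_of_le hm1 with hm | hm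
    · -- m = 1 : same as base case
      subst hm
      obtain ⟨hq1, hq10, hq11⟩ := hq 0 one_pos
      obtain ⟨t, ht, htd⟩ := two_geo hH hf hq1 (by rw [hf0, hq10]) (by rw [hf1, hq11]) r hr
      refine ⟨0, one_pos, t, ht, le_trans htd ?_⟩
      have : (0:ℝ) ≤ δ * (N+1) := by positivity
      push_cast; linarith
    · -- m ≥ 2
      set j := (m + 1) / 2 with hj
      have h2N : 2 * 2 ^ N = 2 ^ (N + 1) := by ring
      have hj1 : 1 ≤ j := by omega
      have hjm : j < m := by omega
      have hjN : j ≤ 2 ^ N := by omega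
      have hmjN : m - j ≤ 2 ^ N := by omega
      have hmj1 : 1 ≤ m - j := by omega
      obtain ⟨g, hg, hg0, hg1⟩ := hG (x m) (x j)
      obtain ⟨h, hh, hh0, hh1⟩ := hG (x j) (x 0)
      obtain ⟨t', htc⟩ := hH f g h (dist (x 0) (x m)) (dist (x m) (x j)) (dist (x j) (x 0))
        hf hg hh (by rw [hf1, hg0]) (by rw [hg1, hh0]) (by rw [hh1, hf0]) r hr
      rcases htc with ⟨ht', hdist⟩ | ⟨ht', hdist⟩
      · -- close to g : geodesic from x m to x j ; recurse on back half
        set b := dist (x m) (x j)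
        have hgr : IsGeodesicSeg (fun u => g (b - u)) 0 b := geo_rev hg
        set x2 : ℕ → X := fun i => x (j + i) with hx2
        set q2 : ℕ → ℝ → X := fun i => q (j + i) with hq2
        have hd2 : dist (x2 0) (x2 (m - j)) = b := by
          simp only [hx2]
          rw [show j + 0 = j by ring, show j + (m - j) = m by omega, dist_comm]
        have hr' : b - t' ∈ Set.Icc (0:ℝ) b := ⟨by linarith [ht'.2], by linarith [ht'.1]⟩
        obtain ⟨i, him, t, ht, htd⟩ := ih (m - j) hmj1 hmjN x2 q2
          (fun i hi => by
            have := hq (j + i) (by omega)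
            simpa [hx2, hq2, show j + i + 1 = j + (i+1) by ring] using this)
          (fun u => g (b - u)) (by rw [hd2]; exact hgr)
          (by simp only [hx2]; simpa using hg1)
          (by rw [hd2]; simp only [hx2]; simpa [show j + (m-j) = m by omega] using hg0)
          (b - t') (by rw [hd2]; exact hr')
        refine ⟨j + i, by omega, t, ?_, ?_⟩
        · simpa [hx2, show j + i + 1 = j + (i+1) by ring] using ht
        · have he : g (b - (b - t')) = g t' := by congr 1; ring
          rw [he] at htd
          have htr : dist (f r) (q (j+i) t) ≤ dist (f r) (g t') + dist (g t') (q (j+i) t) :=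
            dist_triangle _ _ _
          have h2 : dist (g t') (q (j+i) t) ≤ δ * N + δ := by simpa [hq2] using htd
          refine le_trans htr ?_
          push_cast; linarith
      · -- close to h : geodesic from x j to x 0 ; recurse on front half
        set cc := dist (x j) (x 0)
        have hhr : IsGeodesicSeg (fun u => h (cc - u)) 0 cc := geo_rev hh
        have hd1 : dist (x 0) (x j) = cc := dist_comm (x j) (x 0) ▸ rfl
        have hr' : cc - t' ∈ Set.Icc (0:ℝ) cc := ⟨by linarith [ht'.2], by linarith [ht'.1]⟩
        obtain ⟨i, him, t, ht, htd⟩ := ih j hj1 hjN x q (fun i hi => hq i (by omega))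
          (fun u => h (cc - u)) (by rw [hd1]; exact hhr)
          (by simpa using hh1) (by rw [hd1]; simpa using hh0)
          (cc - t') (by rw [hd1]; exact hr')
        refine ⟨i, by omega, t, ht, ?_⟩
        have he : h (cc - (cc - t')) = h t' := by congr 1; ring
        rw [he] at htd
        have htr : dist (f r) (q i t) ≤ dist (f r) (h t') + dist (h t') (q i t) :=
          dist_triangle _ _ _
        refine le_trans htr ?_
        push_cast; linarith

lemma lipOn_continuousOn {q : ℝ → X} {L : ℝ}
    (hlip : ∀ s t : ℝ, 0 ≤ s → s ≤ t → t ≤ L → dist (q s) (q t) ≤ t - s) :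
    ContinuousOn q (Set.Icc 0 L) := by
  rw [Metric.continuousOn_iff]
  intro x hx ε hε
  refine ⟨ε, hε, fun y hy hxy => ?_⟩
  have key : dist (q y) (q x) ≤ |y - x| := by
    rcases le_total y x with h | h
    · have := hlip y x hy.1 h hx.2
      rw [abs_sub_comm, abs_of_nonneg (by linarith)]; linarith
    · have := hlip x y hx.1 h hy.2
      rw [dist_comm, abs_of_nonneg (by linarith)]; linarith
  calc dist (q y) (q x) ≤ |y - x| := key
    _ = dist y x := (Real.dist_eq y x).symm
    _ < ε := hxy

noncomputable def Hconst (δ lam c : ℝ) : ℝ :=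
  max 1 ((2*δ*Real.sqrt (6*lam+2)/Real.log 2 + (2*δ*Real.sqrt c/Real.log 2 + δ + 1) + 1)^2)

lemma concat_path {q₁ q₂ : ℝ → X} {la lb : ℝ} (ha : 0 ≤ la) (hb : 0 ≤ lb)
    (lip1 : ∀ s t : ℝ, 0 ≤ s → s ≤ t → t ≤ la → dist (q₁ s) (q₁ t) ≤ t - s)
    (lip2 : ∀ s t : ℝ, 0 ≤ s → s ≤ t → t ≤ lb → dist (q₂ s) (q₂ t) ≤ t - s)
    (hj : q₁ la = q₂ 0) :
    ∃ σ : ℝ → X, σ 0 = q₁ 0 ∧ σ (la + lb) = q₂ lb ∧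
      (∀ s t : ℝ, 0 ≤ s → s ≤ t → t ≤ la + lb → dist (σ s) (σ t) ≤ t - s) ∧
      (∀ u ∈ Set.Icc 0 (la+lb),
        (∃ v ∈ Set.Icc 0 la, σ u = q₁ v) ∨ (∃ v ∈ Set.Icc 0 lb, σ u = q₂ v)) := by
  classical
  refine ⟨fun u => if u ≤ la then q₁ u else q₂ (u - la), by simp [ha], ?_, ?_, ?_⟩
  · by_cases h : la + lb ≤ la
    · have hb0 : lb = 0 := le_antisymm (by linarith) hb
      rw [hb0, add_zero]
      show (if la ≤ la then q₁ la else q₂ (la - la)) = q₂ 0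
      rw [if_pos le_rfl, hj]
    · simp only [if_neg h, add_sub_cancel_left]
  · intro s t hs hst ht
    by_cases h1 : t ≤ la
    · simp only [if_pos (le_trans hst h1), if_pos h1]
      exact lip1 s t hs hst h1
    · by_cases h2 : s ≤ la
      · simp only [if_pos h2, if_neg h1]
        calc dist (q₁ s) (q₂ (t - la)) ≤ dist (q₁ s) (q₁ la) + dist (q₁ la) (q₂ (t - la)) :=
              dist_triangle _ _ _
          _ ≤ (la - s) + (t - la) := by
              have h3 := lip1 s la hs h2 le_rfl
              have h4 := lip2 0 (t - la) le_rfl (by linarith) (by linarith)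
              simp only [sub_zero] at h4
              rw [← hj] at h4
              linarith
          _ = t - s := by ring
      · simp only [if_neg h1, if_neg h2]
        have := lip2 (s - la) (t - la) (by linarith) (by linarith) (by linarith)
        linarith
  · intro u hu
    by_cases h : u ≤ la
    · exact Or.inl ⟨u, ⟨hu.1, h⟩, by simp [h]⟩
    · exact Or.inr ⟨u - la, ⟨by linarith, by linarith [hu.2]⟩, by simp [h]⟩

lemma sqrt_add_le' (x y : ℝ) (hx : 0 ≤ x) (hy : 0 ≤ y) :
    Real.sqrt (x + y) ≤ Real.sqrt x + Real.sqrt y := by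
  rw [show Real.sqrt x + Real.sqrt y = Real.sqrt ((Real.sqrt x + Real.sqrt y)^2) from
    (Real.sqrt_sq (by positivity)).symm]
  apply Real.sqrt_le_sqrt
  nlinarith [Real.sq_sqrt hx, Real.sq_sqrt hy, Real.sqrt_nonneg x, Real.sqrt_nonneg y]

set_option maxHeartbeats 1000000 in
lemma morse (hG : GeodesicSpace X) (hH : DeltaHyperbolic X δ) (hδ : 0 ≤ δ)
    (hlam : 1 ≤ lam) (hc : 0 ≤ c) {q : ℝ → X} {L : ℝ}
    (hq : QuasiGeodesicPath lam c q L) {f : ℝ → X}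
    (hf : IsGeodesicSeg f 0 (dist (q 0) (q L))) (hf0 : f 0 = q 0)
    (hf1 : f (dist (q 0) (q L)) = q L) :
    ∀ r ∈ Set.Icc 0 (dist (q 0) (q L)),
      ∃ t ∈ Set.Icc 0 L, dist (f r) (q t) ≤ Hconst δ lam c := by
  obtain ⟨hL0, hlip, hqg⟩ := hq
  set a := dist (q 0) (q L) with hadef
  set K := q '' Set.Icc 0 L with hKdef
  have hKne : K.Nonempty := ⟨q 0, ⟨0, ⟨le_rfl, hL0⟩, rfl⟩⟩
  have hKc : IsCompact K := isCompact_Icc.image_of_continuousOn (lipOn_continuousOn hlip)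
  set φ := fun s => Metric.infDist (f s) K with hφdef
  have hfc : ContinuousOn f (Set.Icc 0 a) := lipOn_continuousOn (geo_lip hf)
  have hφc : ContinuousOn φ (Set.Icc 0 a) :=
    (Metric.continuous_infDist_pt K).comp_continuousOn hfc
  have ha0 : (0:ℝ) ≤ a := hf.1
  obtain ⟨sm, hsm, hmax⟩ := isCompact_Icc.exists_isMaxOn ⟨0, le_rfl, ha0⟩ hφc
  set D := φ sm with hDdef
  intro r hr
  by_cases hD : D ≤ Hconst δ lam c
  · obtain ⟨y, hyK, hy⟩ := hKc.exists_infDist_eq_dist hKne (f r)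
    obtain ⟨t, ht, rfl⟩ := hyK
    refine ⟨t, ht, ?_⟩
    rw [← hy]
    exact le_trans (hmax hr) hD
  · exfalso
    push_neg at hD
    have hH1 : (1:ℝ) ≤ Hconst δ lam c := le_max_left _ _
    have hD1 : 1 < D := lt_of_le_of_lt hH1 hD
    have hsm0 : 0 ≤ sm := hsm.1
    have hsma : sm ≤ a := hsm.2
    set s₁ := max 0 (sm - 2*D) with hs₁def
    set s₂ := min a (sm + 2*D) with hs₂def
    have hs₁ : s₁ ∈ Set.Icc 0 a := ⟨le_max_left _ _, max_le ha0 (by linarith)⟩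
    have hs₂ : s₂ ∈ Set.Icc 0 a := ⟨le_min ha0 (by linarith), min_le_left _ _⟩
    have hs₁sm : s₁ ≤ sm := max_le hsm0 (by linarith)
    have hsms₂ : sm ≤ s₂ := le_min hsma (by linarith)
    have h21 : s₂ - s₁ ≤ 4*D := by
      have h1 := le_max_right 0 (sm - 2*D)
      have h2 := min_le_right a (sm + 2*D)
      linarith
    have hKD : ∀ y ∈ K, D ≤ dist (f sm) y := fun y hy =>
      Metric.infDist_le_dist_of_mem hy
    have hφle : ∀ s ∈ Set.Icc 0 a, φ s ≤ D := fun s hs => hmax hs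
    obtain ⟨y₁, hy₁K, hy₁⟩ := hKc.exists_infDist_eq_dist hKne (f s₁)
    obtain ⟨t₁, ht₁, hyt₁⟩ := hy₁K
    obtain ⟨y₂, hy₂K, hy₂⟩ := hKc.exists_infDist_eq_dist hKne (f s₂)
    obtain ⟨t₂, ht₂, hyt₂⟩ := hy₂K
    have key₁ : ∀ p' : X, dist (f s₁) p' ≤ φ s₁ → D ≤ dist (f sm) p' := by
      intro p' hp'
      by_cases hcase : sm - 2*D ≤ 0
      · have hs₁0 : s₁ = 0 := max_eq_left (by linarith)
        have hφ0 : φ s₁ = 0 := by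
          rw [hs₁0]; simp only [hφdef]; rw [hf0]
          exact Metric.infDist_zero_of_mem ⟨0, ⟨le_rfl, hL0⟩, rfl⟩
        have hpp : p' = f s₁ := by
          have : dist (f s₁) p' ≤ 0 := hp'.trans (le_of_eq hφ0)
          have := le_antisymm this dist_nonneg
          rw [dist_comm] at this
          exact eq_of_dist_eq_zero this
        rw [hpp, hs₁0, hf0]
        exact hKD _ ⟨0, ⟨le_rfl, hL0⟩, rfl⟩
      · have hs₁e : s₁ = sm - 2*D := max_eq_right (by linarith)
        have hdist : dist (f sm) (f s₁) = 2*D := by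
          rw [hf.2 sm hsm s₁ hs₁, hs₁e, abs_of_nonneg (by linarith)]
          ring
        have h3 : φ s₁ ≤ D := hφle s₁ hs₁
        have h4 := dist_triangle (f sm) p' (f s₁)
        rw [dist_comm p' (f s₁)] at h4
        linarith
    have key₂ : ∀ p' : X, dist (f s₂) p' ≤ φ s₂ → D ≤ dist (f sm) p' := by
      intro p' hp'
      by_cases hcase : a ≤ sm + 2*D
      · have hs₂0 : s₂ = a := min_eq_left (by linarith)
        have hφ0 : φ s₂ = 0 := by
          rw [hs₂0]; simp only [hφdef]; rw [hf1]
          exact Metric.infDist_zero_of_mem ⟨L, ⟨hL0, le_rfl⟩, rfl⟩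
        have hpp : p' = f s₂ := by
          have : dist (f s₂) p' ≤ 0 := hp'.trans (le_of_eq hφ0)
          have := le_antisymm this dist_nonneg
          rw [dist_comm] at this
          exact eq_of_dist_eq_zero this
        rw [hpp, hs₂0, hf1]
        exact hKD _ ⟨L, ⟨hL0, le_rfl⟩, rfl⟩
      · have hs₂e : s₂ = sm + 2*D := min_eq_right (by linarith)
        have hdist : dist (f sm) (f s₂) = 2*D := by
          rw [hf.2 sm hsm s₂ hs₂, hs₂e, abs_of_nonpos (by linarith)]
          ring
        have h3 : φ s₂ ≤ D := hφle s₂ hs₂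
        have h4 := dist_triangle (f sm) p' (f s₂)
        rw [dist_comm p' (f s₂)] at h4
        linarith
    -- connector geodesics
    obtain ⟨g₁, hg₁, hg₁0, hg₁1⟩ := hG (f s₁) (q t₁)
    obtain ⟨g₃, hg₃, hg₃0, hg₃1⟩ := hG (q t₂) (f s₂)
    set l₁ := dist (f s₁) (q t₁) with hl₁def
    set l₃ := dist (q t₂) (f s₂) with hl₃def
    have hl₁ : l₁ = φ s₁ := by rw [hl₁def, hyt₁]; exact hy₁.symm
    have hl₃ : l₃ = φ s₂ := by rw [hl₃def, dist_comm, hyt₂]; exact hy₂.symm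
    -- middle path
    have hmid : ∃ (mid : ℝ → X) (l₂ : ℝ), 0 ≤ l₂ ∧ mid 0 = q t₁ ∧ mid l₂ = q t₂ ∧
        (∀ s t : ℝ, 0 ≤ s → s ≤ t → t ≤ l₂ → dist (mid s) (mid t) ≤ t - s) ∧
        l₂ ≤ lam * dist (q t₁) (q t₂) + c ∧
        (∀ u ∈ Set.Icc (0:ℝ) l₂, ∃ tt ∈ Set.Icc 0 L, mid u = q tt) := by
      rcases le_total t₁ t₂ with hto | hto
      · refine ⟨fun u => q (t₁ + u), t₂ - t₁, by linarith, by simp,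
          by simp [show t₁ + (t₂ - t₁) = t₂ by ring], ?_, ?_, ?_⟩
        · intro s t hs hst ht
          have := hlip (t₁+s) (t₁+t) (by linarith [ht₁.1]) (by linarith)
            (by linarith [ht₂.2])
          simpa using this
        · have := hqg t₁ t₂ ht₁.1 hto ht₂.2
          linarith
        · intro u hu
          exact ⟨t₁ + u, ⟨by linarith [ht₁.1, hu.1], by linarith [ht₂.2, hu.2]⟩, rfl⟩
      · refine ⟨fun u => q (t₁ - u), t₁ - t₂, by linarith, by simp,
          by simp [show t₁ - (t₁ - t₂) = t₂ by ring], ?_, ?_, ?_⟩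
        · intro s t hs hst ht
          have := hlip (t₁ - t) (t₁ - s) (by linarith [ht₂.1]) (by linarith)
            (by linarith [ht₁.2])
          rw [dist_comm] at this
          have he : t₁ - s - (t₁ - t) = t - s := by ring
          rw [he] at this
          exact this
        · have := hqg t₂ t₁ ht₂.1 hto ht₁.2
          rw [dist_comm (q t₁) (q t₂)]
          linarith
        · intro u hu
          exact ⟨t₁ - u, ⟨by linarith [ht₂.1, hu.2], by linarith [ht₁.2, hu.1]⟩, rfl⟩
    obtain ⟨mid, l₂, hl₂0, hmid0, hmid1, hmidlip, hl₂le, hmidmem⟩ := hmid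
    obtain ⟨σ₁, hσ₁0, hσ₁1, hσ₁lip, hσ₁mem⟩ := concat_path dist_nonneg hl₂0
      (geo_lip hg₁) hmidlip (by rw [hg₁1, hmid0])
    obtain ⟨σ, hσ0, hσ1, hσlip, hσmem⟩ := concat_path (by positivity) dist_nonneg
      hσ₁lip (geo_lip hg₃) (by rw [hσ₁1, hmid1, hg₃0])
    -- lower bound for all σ points
    have hlow : ∀ u ∈ Set.Icc (0:ℝ) (l₁ + l₂ + l₃), D ≤ dist (f sm) (σ u) := by
      intro u hu
      rcases hσmem u hu with ⟨v, hv, hveq⟩ | ⟨v, hv, hveq⟩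
      · rcases hσ₁mem v hv with ⟨w', hw', hweq⟩ | ⟨w', hw', hweq⟩
        · rw [hveq, hweq]
          apply key₁
          have h5 : dist (g₁ 0) (g₁ w') = |0 - w'| :=
            hg₁.2 0 ⟨le_rfl, dist_nonneg⟩ w' hw'
          rw [hg₁0] at h5
          rw [h5, abs_of_nonpos (by linarith [hw'.1]), neg_sub, sub_zero]
          rw [← hl₁]
          exact hw'.2
        · rw [hveq, hweq]
          obtain ⟨tt, htt, hqe⟩ := hmidmem w' hw'
          rw [hqe]
          exact hKD _ ⟨tt, htt, rfl⟩
      · rw [hveq]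
        apply key₂
        have h5 : dist (g₃ v) (g₃ l₃) = |v - l₃| :=
          hg₃.2 v hv l₃ ⟨dist_nonneg, le_rfl⟩
        rw [hg₃1] at h5
        rw [dist_comm (f s₂) (g₃ v), h5, abs_of_nonpos (by linarith [hv.2]), ← hl₃]
        linarith [hv.1]
    -- restricted geodesic
    set f' := fun u => f (s₁ + u) with hf'def
    have hds : dist (σ 0) (σ (l₁ + l₂ + l₃)) = s₂ - s₁ := by
      rw [hσ0, hσ₁0, hg₁0, hσ1, hg₃1]
      rw [hf.2 s₁ hs₁ s₂ hs₂, abs_of_nonpos (by linarith), neg_sub]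
    have hf' : IsGeodesicSeg f' 0 (s₂ - s₁) := by
      refine ⟨by linarith, fun u hu v hv => ?_⟩
      have := hf.2 (s₁+u) ⟨by linarith [hu.1, hs₁.1], by linarith [hu.2, hs₂.2]⟩
        (s₁+v) ⟨by linarith [hv.1, hs₁.1], by linarith [hv.2, hs₂.2]⟩
      rw [show s₁ + u - (s₁ + v) = u - v by ring] at this
      exact this
    -- choose N
    set E := (6*lam + 2) * D + c with hEdef
    have hE8 : 8 ≤ E := by
      have h1 : (8:ℝ) ≤ 6*lam+2 := by linarith
      have h2 : (6*lam+2) * 1 ≤ (6*lam+2)*D :=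
        mul_le_mul_of_nonneg_left (le_of_lt hD1) (by linarith)
      rw [hEdef]; linarith
    have hE0 : 0 < E := by linarith
    set N := ⌈Real.logb 2 E⌉₊ with hNdef
    have hlogE0 : 0 ≤ Real.logb 2 E := Real.logb_nonneg one_lt_two (by linarith)
    have hEN : E ≤ 2 ^ N := by
      have h1 : Real.logb 2 E ≤ (N:ℝ) := Nat.le_ceil _
      calc E = 2 ^ Real.logb 2 E := (Real.rpow_logb two_pos (by norm_num) hE0).symm
        _ ≤ (2:ℝ) ^ ((N:ℕ):ℝ) := by
            exact (Real.rpow_le_rpow_left_iff (by norm_num : (1:ℝ) < 2)).mpr h1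
        _ = 2 ^ N := by rw [Real.rpow_natCast]
    have hNle : (N:ℝ) ≤ Real.logb 2 E + 1 := le_of_lt (Nat.ceil_lt_add_one hlogE0)
    -- length bounds
    have hφ₁D : φ s₁ ≤ D := hφle s₁ hs₁
    have hφ₂D : φ s₂ ≤ D := hφle s₂ hs₂
    have hd12 : dist (q t₁) (q t₂) ≤ 6 * D := by
      have h1 := dist_triangle (q t₁) (f s₁) (q t₂)
      have h2 := dist_triangle (f s₁) (f s₂) (q t₂)
      have h3 : dist (f s₁) (f s₂) = s₂ - s₁ := by
        rw [hf.2 s₁ hs₁ s₂ hs₂, abs_of_nonpos (by linarith), neg_sub]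
      have h4 : dist (q t₁) (f s₁) = l₁ := by rw [dist_comm]
      have h5 : dist (f s₂) (q t₂) = l₃ := by rw [dist_comm]
      rw [h4] at h1; rw [h3, h5] at h2
      have := hl₁ ▸ hφ₁D
      have := hl₃ ▸ hφ₂D
      linarith
    have hℓσE : l₁ + l₂ + l₃ ≤ E := by
      have h1 : l₂ ≤ lam * (6*D) + c := by
        refine le_trans hl₂le ?_
        have := mul_le_mul_of_nonneg_left hd12 (by linarith : (0:ℝ) ≤ lam)
        linarith
      have h2 : l₁ ≤ D := hl₁ ▸ hφ₁D
      have h3 : l₃ ≤ D := hl₃ ▸ hφ₂D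
      rw [hEdef]; linarith
    have hσl0 : (0:ℝ) ≤ l₁ + l₂ + l₃ := by positivity
    obtain ⟨t'', ht'', htd''⟩ := path_near hG hH hδ N σ (l₁ + l₂ + l₃) hσl0
      (le_trans hℓσE hEN) hσlip f'
      (by rw [hds]; exact hf')
      (by rw [hσ0, hσ₁0, hg₁0]; simp [hf'def])
      (by rw [hds, hσ1, hg₃1]; simp only [hf'def]
          rw [show s₁ + (s₂ - s₁) = s₂ by ring])
      (sm - s₁) (by rw [hds]; exact ⟨by linarith, by linarith⟩)
    have hfsm : f' (sm - s₁) = f sm := by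
      simp only [hf'def]; rw [show s₁ + (sm - s₁) = sm by ring]
    rw [hfsm] at htd''
    have hcontr : D ≤ δ * N + 1 := le_trans (hlow t'' ht'') htd''
    -- numeric contradiction
    have hlog2pos : (0:ℝ) < Real.log 2 := Real.log_pos (by norm_num)
    have hDpos : (0:ℝ) ≤ (6*lam+2)*D := mul_nonneg (by linarith) (by linarith)
    have hsqrtE : Real.sqrt E ≤ Real.sqrt (6*lam+2) * Real.sqrt D + Real.sqrt c := by
      rw [hEdef]
      refine le_trans (sqrt_add_le' ((6*lam+2)*D) c hDpos hc) ?_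
      rw [Real.sqrt_mul (by linarith : (0:ℝ) ≤ 6*lam+2)]
    have hlogE : Real.logb 2 E ≤ 2 * Real.sqrt E / Real.log 2 := by
      have hsE : 0 < Real.sqrt E := Real.sqrt_pos.mpr hE0
      have h1 : Real.log (Real.sqrt E) ≤ Real.sqrt E := by
        have := Real.log_le_sub_one_of_pos hsE; linarith
      have h2 : Real.log E ≤ 2 * Real.sqrt E := by
        have h3 : Real.log E = 2 * Real.log (Real.sqrt E) := by
          rw [Real.log_sqrt (le_of_lt hE0)]; ring
        linarith
      rw [Real.logb]
      gcongr
    set P := 2*δ*Real.sqrt (6*lam+2)/Real.log 2 with hPdef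
    set Q := 2*δ*Real.sqrt c/Real.log 2 + δ + 1 with hQdef
    have hP0 : 0 ≤ P := by
      rw [hPdef]
      exact div_nonneg (mul_nonneg (mul_nonneg (by norm_num) hδ) (Real.sqrt_nonneg _))
        (le_of_lt hlog2pos)
    have hQ0 : 0 ≤ 2*δ*Real.sqrt c/Real.log 2 := by
      exact div_nonneg (mul_nonneg (mul_nonneg (by norm_num) hδ) (Real.sqrt_nonneg _))
        (le_of_lt hlog2pos)
    have hQ1 : 1 ≤ Q := by rw [hQdef]; linarith
    have hPQ : D ≤ P * Real.sqrt D + Q := by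
      have h1 : D ≤ δ * (Real.logb 2 E + 1) + 1 := by
        have := mul_le_mul_of_nonneg_left hNle hδ
        linarith [hcontr]
      have h2 : δ * Real.logb 2 E ≤ δ * (2 * Real.sqrt E / Real.log 2) :=
        mul_le_mul_of_nonneg_left hlogE hδ
      have h3 : δ * (2 * Real.sqrt E / Real.log 2) ≤
          δ * (2 * (Real.sqrt (6*lam+2) * Real.sqrt D + Real.sqrt c) / Real.log 2) := by
        apply mul_le_mul_of_nonneg_left _ hδ
        gcongr
      have h4 : δ * (2 * (Real.sqrt (6*lam+2) * Real.sqrt D + Real.sqrt c) / Real.log 2) =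
          P * Real.sqrt D + 2*δ*Real.sqrt c/Real.log 2 := by
        rw [hPdef]; field_simp
      rw [hQdef]; linarith
    have hHP : (P + Q + 1)^2 ≤ Hconst δ lam c := by
      simp only [Hconst]
      rw [hPdef, hQdef]
      exact le_max_right _ _
    have hsD : P + Q + 1 ≤ Real.sqrt D := by
      have h1 : (P+Q+1)^2 ≤ D := le_of_lt (lt_of_le_of_lt hHP hD)
      have h2 := Real.sqrt_le_sqrt h1
      rwa [Real.sqrt_sq (by linarith)] at h2
    have hsD1 : 1 ≤ Real.sqrt D := by
      rw [show (1:ℝ) = Real.sqrt 1 from (Real.sqrt_one).symm]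
      exact Real.sqrt_le_sqrt (by linarith)
    have hDD : Real.sqrt D * Real.sqrt D = D := Real.mul_self_sqrt (by linarith)
    have hf1' := mul_le_mul_of_nonneg_right hsD (Real.sqrt_nonneg D)
    have hf2' := mul_le_mul_of_nonneg_left hsD1 (by linarith : (0:ℝ) ≤ Q)
    rw [add_mul, add_mul, one_mul] at hf1'
    rw [mul_one] at hf2'
    linarith

lemma half_near (hG : GeodesicSpace X) (hH : DeltaHyperbolic X δ) (hδ : 0 ≤ δ)
    (hlam : 1 ≤ lam) (hc : 0 ≤ c) (N m : ℕ) (hm1 : 1 ≤ m) (hmN : m ≤ 2 ^ N)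
    (P : ℕ → ℝ → X) (LL : ℕ → ℝ)
    (hqg : ∀ i < m, QuasiGeodesicPath lam c (P i) (LL i))
    (x : ℕ → X) (hx0 : ∀ i < m, P i 0 = x i) (hx1 : ∀ i < m, P i (LL i) = x (i+1))
    (f : ℝ → X) (hf : IsGeodesicSeg f 0 (dist (x 0) (x m))) (hf0 : f 0 = x 0)
    (hf1 : f (dist (x 0) (x m)) = x m) :
    ∀ r ∈ Set.Icc 0 (dist (x 0) (x m)),
      ∃ i, i < m ∧ ∃ t ∈ Set.Icc 0 (LL i),
        dist (f r) (P i t) ≤ δ * N + δ + Hconst δ lam c := by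
  intro r hr
  choose qg hqg1 hqg2 hqg3 using fun i => hG (x i) (x (i+1))
  obtain ⟨i, him, t, ht, htd⟩ := poly_near hG hH hδ N m hm1 hmN x qg
    (fun i _ => ⟨hqg1 i, hqg2 i, hqg3 i⟩) f hf hf0 hf1 r hr
  have he0 : P i 0 = x i := hx0 i him
  have he1 : P i (LL i) = x (i+1) := hx1 i him
  have hdd : dist (P i 0) (P i (LL i)) = dist (x i) (x (i+1)) := by rw [he0, he1]
  obtain ⟨t', ht', htd'⟩ := morse hG hH hδ hlam hc (hqg i him) (f := qg i)
    (by rw [hdd]; exact hqg1 i) (by rw [hqg2 i, he0]) (by rw [hdd, hqg3 i, he1])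
    t (by rw [hdd]; exact ht)
  refine ⟨i, him, t', ht', ?_⟩
  calc dist (f r) (P i t') ≤ dist (f r) (qg i t) + dist (qg i t) (P i t') :=
        dist_triangle _ _ _
    _ ≤ δ * N + δ + Hconst δ lam c := by linarith

end Helpers

set_option maxHeartbeats 1000000 in
theorem statement16 (δ lam c : ℝ) (hδ : 0 ≤ δ) (hlam : 1 ≤ lam) (hc : 0 ≤ c) :
    ∃ θ : ℝ,
      ∀ (X : Type u) (_ : MetricSpace X), GeodesicSpace X → DeltaHyperbolic X δ →
        ∀ (n : ℕ), 2 ≤ n →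
          ∀ (p : Fin n → ℝ → X) (L : Fin n → ℝ),
            (∀ i, QuasiGeodesicPath lam c (p i) (L i)) →
            (∀ i, p i (L i) = p (finRotate n i) 0) →
            ∃ (a b : Fin n) (s t : ℝ),
              s ∈ Set.Icc 0 (L a) ∧ t ∈ Set.Icc 0 (L b) ∧ (a = b → s ≤ t) ∧
              dist (p a s) (p b t) ≤ 2 * δ * (2 + Real.logb 2 n) + θ ∧
              -- the geodesic `[u, v]` from `u = p a s` to `v = p b t` divides `𝓟` into an
              -- `m₁`-gon and an `m₂`-gon, where:
              (let m₁ : ℕ := (b - a : Fin n).val + 2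
               let m₂ : ℕ := n - (b - a : Fin n).val + 2
               (n : ℝ) / 4 < m₁ ∧ (m₁ : ℝ) < 3 * (n : ℝ) / 4 + 2 ∧
               (n : ℝ) / 4 < m₂ ∧ (m₂ : ℝ) < 3 * (n : ℝ) / 4 + 2) := by
  refine ⟨2 * Hconst δ lam c, ?_⟩
  intro X _ hG hH n hn p L hqg hclose
  have hn0 : 0 < n := by omega
  -- characterization of finRotate
  have hrot : ∀ j : Fin n, (finRotate n j).val = if j.val = n - 1 then 0 else j.val + 1 := by
    intro j
    obtain ⟨m, rfl⟩ : ∃ m, n = m + 1 := ⟨n - 1, by omega⟩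
    rw [finRotate_succ_apply, Fin.val_add_one]
    rcases eq_or_ne j (Fin.last m) with hj | hj
    · rw [if_pos hj, if_pos (by rw [hj, Fin.val_last]; omega)]
    · rw [if_neg hj, if_neg (fun hcc => hj (Fin.ext (by rw [Fin.val_last]; omega)))]
  set H := Hconst δ lam c with hHdef
  have hH1 : (1:ℝ) ≤ H := le_max_left _ _
  set N := Nat.clog 2 n with hNdef
  set D' := δ * N + δ + H with hD'def
  have hδN : 0 ≤ δ * (N:ℝ) := mul_nonneg hδ (Nat.cast_nonneg N)
  have hD'0 : 0 ≤ D' := by rw [hD'def]; linarith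
  -- vertices and sides as ℕ-indexed functions
  set x : ℕ → X := fun i => if h : i < n then p ⟨i, h⟩ 0 else p ⟨0, hn0⟩ 0 with hxdef
  set P : ℕ → ℝ → X := fun i => if h : i < n then p ⟨i, h⟩ else p ⟨0, hn0⟩ with hPdef
  set LL : ℕ → ℝ := fun i => if h : i < n then L ⟨i, h⟩ else L ⟨0, hn0⟩ with hLdef
  have hPeq : ∀ i (h : i < n), P i = p ⟨i, h⟩ := fun i h => by simp [hPdef, h]
  have hLeq : ∀ i (h : i < n), LL i = L ⟨i, h⟩ := fun i h => by simp [hLdef, h]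
  have hxeq : ∀ i (h : i < n), x i = p ⟨i, h⟩ 0 := fun i h => by simp [hxdef, h]
  have hxn : x n = x 0 := by simp [hxdef, lt_irrefl, hn0]
  have hP0 : ∀ i < n, P i 0 = x i := fun i h => by rw [hPeq i h, hxeq i h]
  have hP1 : ∀ i < n, P i (LL i) = x (i+1) := by
    intro i hi
    rw [hPeq i hi, hLeq i hi, hclose ⟨i, hi⟩]
    by_cases hlast : i = n - 1
    · have hv : (finRotate n ⟨i, hi⟩).val = 0 := by rw [hrot]; simp [hlast]
      have hfr : finRotate n ⟨i, hi⟩ = ⟨0, hn0⟩ := Fin.ext hv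
      rw [hfr, show i + 1 = n by omega, hxn]
      exact (hxeq 0 hn0).symm
    · have hi1 : i + 1 < n := by omega
      have hv : (finRotate n ⟨i, hi⟩).val = i + 1 := by rw [hrot]; simp [hlast]
      have hfr : finRotate n ⟨i, hi⟩ = ⟨i+1, hi1⟩ := Fin.ext hv
      rw [hfr]
      exact (hxeq (i+1) hi1).symm
  have hQG : ∀ i < n, QuasiGeodesicPath lam c (P i) (LL i) := fun i h => by
    rw [hPeq i h, hLeq i h]; exact hqg _
  have hLL0 : ∀ i < n, 0 ≤ LL i := fun i h => (hQG i h).1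
  set k := n / 2 with hkdef
  have hk1 : 1 ≤ k := by omega
  have hkn : k < n := by omega
  have hnk1 : 1 ≤ n - k := by omega
  have hnN : n ≤ 2 ^ N := Nat.le_pow_clog (by norm_num) n
  have hkN : k ≤ 2 ^ N := by omega
  have hnkN : n - k ≤ 2 ^ N := by omega
  obtain ⟨f, hf, hf0, hf1⟩ := hG (x 0) (x k)
  set ad := dist (x 0) (x k) with haddef
  have had0 : 0 ≤ ad := hf.1
  have coverA : ∀ r ∈ Set.Icc 0 ad,
      ∃ α, α < k ∧ ∃ s ∈ Set.Icc 0 (LL α), dist (f r) (P α s) ≤ D' := by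
    intro r hr
    obtain ⟨i, hik, t, ht, htd⟩ := half_near hG hH hδ hlam hc N k hk1 hkN P LL
      (fun i hi => hQG i (by omega)) x (fun i hi => hP0 i (by omega))
      (fun i hi => hP1 i (by omega)) f hf hf0 hf1 r hr
    exact ⟨i, hik, t, ht, htd⟩
  have coverB : ∀ r ∈ Set.Icc 0 ad,
      ∃ β, k ≤ β ∧ β < n ∧ ∃ t ∈ Set.Icc 0 (LL β), dist (f r) (P β t) ≤ D' := by
    intro r hr
    have hfr : IsGeodesicSeg (fun u => f (ad - u)) 0 ad := geo_rev hf
    have hd2 : dist (x (k + 0)) (x (k + (n - k))) = ad := by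
      rw [Nat.add_zero, show k + (n - k) = n by omega, hxn, dist_comm]
    obtain ⟨j, hj, t, ht, htd⟩ := half_near hG hH hδ hlam hc N (n - k) hnk1 hnkN
      (fun j => P (k + j)) (fun j => LL (k + j))
      (fun j hj => hQG (k+j) (by omega)) (fun j => x (k + j))
      (fun j hj => hP0 (k+j) (by omega))
      (fun j hj => by
        show P (k+j) (LL (k+j)) = x (k + (j+1))
        rw [show k + (j+1) = (k+j) + 1 by ring]
        exact hP1 (k+j) (by omega))
      (fun u => f (ad - u)) (by rw [hd2]; exact hfr)
      (by show f (ad - 0) = x (k + 0); rw [sub_zero, Nat.add_zero]; exact hf1)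
      (by rw [hd2]; show f (ad - ad) = x (k + (n - k));
          rw [sub_self, hf0, show k + (n-k) = n by omega, hxn])
      (ad - r) (by rw [hd2]; exact ⟨by linarith [hr.2], by linarith [hr.1]⟩)
    refine ⟨k + j, by omega, by omega, t, ht, ?_⟩
    have he : ad - (ad - r) = r := by ring
    rw [he] at htd
    exact htd
  have hfc : ContinuousOn f (Set.Icc 0 ad) := lipOn_continuousOn (geo_lip hf)
  set T : ℕ → Set ℝ := fun i =>
    {r | r ∈ Set.Icc 0 ad ∧ ∃ t ∈ Set.Icc 0 (LL i), dist (f r) (P i t) ≤ D'} with hTdef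
  have hTclosed : ∀ i < n, IsClosed (T i) := by
    intro i hi
    have hKc : IsCompact (P i '' Set.Icc 0 (LL i)) :=
      isCompact_Icc.image_of_continuousOn (lipOn_continuousOn (hQG i hi).2.1)
    have hKne : (P i '' Set.Icc 0 (LL i)).Nonempty :=
      ⟨P i 0, 0, ⟨le_rfl, hLL0 i hi⟩, rfl⟩
    have hTeq : T i = Set.Icc 0 ad ∩
        (fun r => Metric.infDist (f r) (P i '' Set.Icc 0 (LL i))) ⁻¹' Set.Iic D' := by
      ext r
      simp only [hTdef, Set.mem_setOf_eq, Set.mem_inter_iff, Set.mem_preimage, Set.mem_Iic]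
      constructor
      · rintro ⟨h1, t, ht, hd⟩
        exact ⟨h1, le_trans (Metric.infDist_le_dist_of_mem ⟨t, ht, rfl⟩) hd⟩
      · rintro ⟨h1, h2⟩
        obtain ⟨y, hyK, hy⟩ := hKc.exists_infDist_eq_dist hKne (f r)
        obtain ⟨t, ht, rfl⟩ := hyK
        exact ⟨h1, t, ht, by rw [← hy]; exact h2⟩
    rw [hTeq]
    exact ContinuousOn.preimage_isClosed_of_isClosed
      ((Metric.continuous_infDist_pt _).comp_continuousOn hfc) isClosed_Icc isClosed_Iic
  have h0T0 : (0:ℝ) ∈ T 0 := by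
    refine ⟨⟨le_rfl, had0⟩, 0, ⟨le_rfl, hLL0 0 (by omega)⟩, ?_⟩
    rw [hf0, ← hP0 0 (by omega)]
    simpa using hD'0
  have h0Tn : (0:ℝ) ∈ T (n-1) := by
    refine ⟨⟨le_rfl, had0⟩, LL (n-1), ⟨hLL0 (n-1) (by omega), le_rfl⟩, ?_⟩
    rw [hf0, hP1 (n-1) (by omega), show n - 1 + 1 = n by omega, hxn]
    simpa using hD'0
  have hadTk : ad ∈ T k := by
    refine ⟨⟨had0, le_rfl⟩, 0, ⟨le_rfl, hLL0 k (by omega)⟩, ?_⟩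
    rw [hf1, ← hP0 k (by omega)]
    simpa using hD'0
  have hadTk1 : ad ∈ T (k-1) := by
    refine ⟨⟨had0, le_rfl⟩, LL (k-1), ⟨hLL0 (k-1) (by omega), le_rfl⟩, ?_⟩
    rw [hf1, hP1 (k-1) (by omega), show k - 1 + 1 = k by omega]
    simpa using hD'0
  have hnr : (2:ℝ) ≤ (n:ℝ) := by exact_mod_cast hn
  -- main claim
  have claim : ∃ α β, α < k ∧ k ≤ β ∧ β < n ∧
      ((n:ℝ)/4 < (β:ℝ) - α ∧ (β:ℝ) - α < 3*(n:ℝ)/4) ∧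
      ∃ s ∈ Set.Icc 0 (LL α), ∃ t ∈ Set.Icc 0 (LL β),
        dist (P α s) (P β t) ≤ 2 * D' := by
    by_contra hno
    have hbad : ∀ r ∈ Set.Icc 0 ad, ∀ α β, α < k → k ≤ β → β < n →
        r ∈ T α → r ∈ T β →
        ¬((n:ℝ)/4 < (β:ℝ) - α ∧ (β:ℝ) - α < 3*(n:ℝ)/4) := by
      intro r hr α β h1 h2 h3 hTα hTβ hgood
      obtain ⟨-, s, hs, hds⟩ := hTα
      obtain ⟨-, t, ht, hdt⟩ := hTβ
      refine hno ⟨α, β, h1, h2, h3, hgood, s, hs, t, ht, ?_⟩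
      have htri := dist_triangle (P α s) (f r) (P β t)
      rw [dist_comm (P α s) (f r)] at htri
      linarith
    set Hi : Set ℝ := {r | ∃ α β, α < k ∧ k ≤ β ∧ β < n ∧
      3*(n:ℝ)/4 ≤ (β:ℝ) - α ∧ r ∈ T α ∧ r ∈ T β} with hHidef
    set Lo : Set ℝ := {r | ∃ α β, α < k ∧ k ≤ β ∧ β < n ∧
      (β:ℝ) - α ≤ (n:ℝ)/4 ∧ r ∈ T α ∧ r ∈ T β} with hLodef
    have hHiclosed : IsClosed Hi := by
      have heq : Hi = ⋃ pr ∈ {pr : ℕ × ℕ | pr.1 < k ∧ k ≤ pr.2 ∧ pr.2 < n ∧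
          3*(n:ℝ)/4 ≤ (pr.2:ℝ) - pr.1}, T pr.1 ∩ T pr.2 := by
        ext r
        simp only [hHidef, Set.mem_setOf_eq, Set.mem_iUnion, Set.mem_inter_iff,
          exists_prop, Prod.exists]
        constructor
        · rintro ⟨α, β, h1, h2, h3, h4, h5, h6⟩; exact ⟨α, β, ⟨h1, h2, h3, h4⟩, h5, h6⟩
        · rintro ⟨α, β, ⟨h1, h2, h3, h4⟩, h5, h6⟩; exact ⟨α, β, h1, h2, h3, h4, h5, h6⟩
      rw [heq]
      apply Set.Finite.isClosed_biUnion
      · refine Set.Finite.subset ((Set.finite_Iio k).prod (Set.finite_Iio n)) ?_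
        rintro ⟨α, β⟩ ⟨h1, h2, h3, h4⟩
        exact ⟨h1, h3⟩
      · rintro ⟨α, β⟩ ⟨h1, h2, h3, h4⟩
        exact (hTclosed α (by omega)).inter (hTclosed β h3)
    have hLoclosed : IsClosed Lo := by
      have heq : Lo = ⋃ pr ∈ {pr : ℕ × ℕ | pr.1 < k ∧ k ≤ pr.2 ∧ pr.2 < n ∧
          (pr.2:ℝ) - pr.1 ≤ (n:ℝ)/4}, T pr.1 ∩ T pr.2 := by
        ext r
        simp only [hLodef, Set.mem_setOf_eq, Set.mem_iUnion, Set.mem_inter_iff,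
          exists_prop, Prod.exists]
        constructor
        · rintro ⟨α, β, h1, h2, h3, h4, h5, h6⟩; exact ⟨α, β, ⟨h1, h2, h3, h4⟩, h5, h6⟩
        · rintro ⟨α, β, ⟨h1, h2, h3, h4⟩, h5, h6⟩; exact ⟨α, β, h1, h2, h3, h4, h5, h6⟩
      rw [heq]
      apply Set.Finite.isClosed_biUnion
      · refine Set.Finite.subset ((Set.finite_Iio k).prod (Set.finite_Iio n)) ?_
        rintro ⟨α, β⟩ ⟨h1, h2, h3, h4⟩
        exact ⟨h1, h3⟩
      · rintro ⟨α, β⟩ ⟨h1, h2, h3, h4⟩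
        exact (hTclosed α (by omega)).inter (hTclosed β h3)
    have hn1cast : ((n-1:ℕ):ℝ) = (n:ℝ) - 1 := by
      rw [Nat.cast_sub (by omega)]; norm_num
    have h0Hi : (0:ℝ) ∈ Hi := by
      have hnot := hbad 0 ⟨le_rfl, had0⟩ 0 (n-1) (by omega) (by omega) (by omega) h0T0 h0Tn
      refine ⟨0, n-1, by omega, by omega, by omega, ?_, h0T0, h0Tn⟩
      rcases not_and_or.mp hnot with h | h
      · exfalso
        apply h
        rw [hn1cast]
        push_cast
        linarith
      · have := le_of_not_gt h
        linarith
    have hadLo : ad ∈ Lo := by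
      have hnot := hbad ad ⟨had0, le_rfl⟩ (k-1) k (by omega) le_rfl (by omega) hadTk1 hadTk
      have hk1cast : ((k-1:ℕ):ℝ) = (k:ℝ) - 1 := by
        rw [Nat.cast_sub (by omega)]; norm_num
      refine ⟨k-1, k, by omega, le_rfl, by omega, ?_, hadTk1, hadTk⟩
      rcases not_and_or.mp hnot with h | h
      · have := le_of_not_gt h
        linarith
      · exfalso
        apply h
        rw [hk1cast]
        linarith
    have hcover : ∀ r ∈ Set.Icc 0 ad, r ∈ Hi ∪ Lo := by
      intro r hr
      obtain ⟨α, hα, s, hs, hds⟩ := coverA r hr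
      obtain ⟨β, hβ1, hβ2, t, ht, hdt⟩ := coverB r hr
      have hTα : r ∈ T α := ⟨hr, s, hs, hds⟩
      have hTβ : r ∈ T β := ⟨hr, t, ht, hdt⟩
      have hnot := hbad r hr α β hα hβ1 hβ2 hTα hTβ
      rcases not_and_or.mp hnot with h | h
      · exact Or.inr ⟨α, β, hα, hβ1, hβ2, le_of_not_gt h, hTα, hTβ⟩
      · exact Or.inl ⟨α, β, hα, hβ1, hβ2, le_of_not_gt h, hTα, hTβ⟩
    have hHiBdd : BddAbove Hi := by
      refine ⟨ad, fun r hr => ?_⟩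
      obtain ⟨α, β, _, _, _, _, hT, _⟩ := hr
      exact hT.1.2
    set rs := sSup Hi with hrsdef
    have hrsHi : rs ∈ Hi := hHiclosed.csSup_mem ⟨0, h0Hi⟩ hHiBdd
    have hrsIcc : rs ∈ Set.Icc 0 ad := by
      obtain ⟨α, β, _, _, _, _, hT, _⟩ := hrsHi
      exact hT.1
    have hrsLo : rs ∈ Lo := by
      by_cases hL : rs ∈ Lo
      · exact hL
      · exfalso
        have hlt : rs < ad := lt_of_le_of_ne hrsIcc.2 (fun he => hL (he ▸ hadLo))
        have hsub : Set.Ioc rs ad ⊆ Lo := by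
          intro r hrm
          have hrIcc : r ∈ Set.Icc 0 ad := ⟨le_trans hrsIcc.1 (le_of_lt hrm.1), hrm.2⟩
          rcases hcover r hrIcc with h | h
          · exact absurd (le_csSup hHiBdd h) (not_le.mpr hrm.1)
          · exact h
        have hmem : rs ∈ closure (Set.Ioc rs ad) := by
          rw [closure_Ioc (ne_of_lt hlt)]
          exact ⟨le_rfl, le_of_lt hlt⟩
        have := closure_mono hsub hmem
        rw [hLoclosed.closure_eq] at this
        exact hL this
    obtain ⟨α₁, β₁, hα₁, hβ₁k, hβ₁n, hhi, hTα₁, -⟩ := hrsHi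
    obtain ⟨α₂, β₂, hα₂, hβ₂k, hβ₂n, hlo, -, hTβ₂⟩ := hrsLo
    have hkr1 : (n:ℝ)/2 - 1 < (k:ℝ) := by
      have h1 : n ≤ 2*k+1 := by omega
      have h2 : (n:ℝ) ≤ 2*(k:ℝ)+1 := by exact_mod_cast h1
      linarith
    have hkr2 : (k:ℝ) ≤ (n:ℝ)/2 := by
      have h1 : 2*k ≤ n := by omega
      have h2 : 2*(k:ℝ) ≤ (n:ℝ) := by exact_mod_cast h1
      linarith
    have hc1 : (α₁:ℝ) ≤ (n:ℝ)/4 - 1 := by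
      have h1 : β₁ + 1 ≤ n := by omega
      have h2 : (β₁:ℝ) + 1 ≤ (n:ℝ) := by exact_mod_cast h1
      linarith
    have hc2 : (β₂:ℝ) ≤ (k:ℝ) - 1 + (n:ℝ)/4 := by
      have h1 : α₂ + 1 ≤ k := by omega
      have h2 : (α₂:ℝ) + 1 ≤ (k:ℝ) := by exact_mod_cast h1
      linarith
    have hβ₂r : (k:ℝ) ≤ (β₂:ℝ) := by exact_mod_cast hβ₂k
    have hα₁0 : (0:ℝ) ≤ (α₁:ℝ) := Nat.cast_nonneg _
    exact hbad rs hrsIcc α₁ β₂ hα₁ hβ₂k hβ₂n hTα₁ hTβ₂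
      ⟨by linarith, by linarith⟩
  -- use the claim
  obtain ⟨α, β, hαk, hkβ, hβn, hgood, s, hs, t, ht, hdist⟩ := claim
  have hαn : α < n := by omega
  have hαβ : α < β := by omega
  refine ⟨⟨α, hαn⟩, ⟨β, hβn⟩, s, t, ?_, ?_, ?_, ?_, ?_⟩
  · rw [← hLeq α hαn]; exact hs
  · rw [← hLeq β hβn]; exact ht
  · intro he
    exfalso
    have := congrArg Fin.val he
    simp only [] at this
    omega
  · have hdist' : dist (p ⟨α, hαn⟩ s) (p ⟨β, hβn⟩ t) ≤ 2 * D' := by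
      rw [← hPeq α hαn, ← hPeq β hβn]; exact hdist
    have hN1 : 1 ≤ N := by
      by_contra hcon
      have hNz : N = 0 := by omega
      rw [hNz] at hnN
      simp at hnN
      omega
    have hNlog : (N:ℝ) ≤ Real.logb 2 (n:ℝ) + 1 := by
      have h1 : (2:ℕ) ^ (N - 1) < n := by
        have := Nat.pow_pred_clog_lt_self (by norm_num : 1 < 2) (by omega : 1 < n)
        rw [← hNdef] at this
        exact this
      have h2 : (2:ℝ) ^ ((N:ℝ) - 1) < (n:ℝ) := by
        have h3 : ((2:ℕ) ^ (N - 1) : ℝ) < (n:ℝ) := by exact_mod_cast h1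
        have h4 : ((2:ℕ) ^ (N - 1) : ℝ) = (2:ℝ) ^ ((N - 1 : ℕ) : ℝ) := by
          push_cast
          rw [Real.rpow_natCast]
        have h5 : ((N - 1 : ℕ) : ℝ) = (N:ℝ) - 1 := by
          rw [Nat.cast_sub hN1]; norm_num
        rw [h4, h5] at h3
        exact h3
      have h3 : (N:ℝ) - 1 < Real.logb 2 (n:ℝ) :=
        (Real.lt_logb_iff_rpow_lt (by norm_num) (by positivity)).mpr h2
      linarith
    have hmul := mul_le_mul_of_nonneg_left hNlog hδ
    calc dist (p ⟨α, hαn⟩ s) (p ⟨β, hβn⟩ t) ≤ 2 * D' := hdist'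
      _ ≤ 2 * δ * (2 + Real.logb 2 (n:ℝ)) + 2 * H := by rw [hD'def]; ring_nf; nlinarith [hmul]
  · -- the polygon-division counts
    have hsub : ((⟨β, hβn⟩ - ⟨α, hαn⟩ : Fin n)).val = β - α := by
      rw [Fin.sub_def]
      simp only []
      have h1 : n - α + β = (β - α) + n := by omega
      rw [h1, Nat.add_mod_right, Nat.mod_eq_of_lt (by omega)]
    have hcast : ((β - α : ℕ):ℝ) = (β:ℝ) - (α:ℝ) := by
      rw [Nat.cast_sub (by omega)]
    have hcast2 : ((n - (β - α) : ℕ):ℝ) = (n:ℝ) - ((β:ℝ) - (α:ℝ)) := by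
      rw [Nat.cast_sub (by omega), hcast]
    refine ⟨?_, ?_, ?_, ?_⟩
    · rw [hsub]; push_cast [hcast]; linarith [hgood.1]
    · rw [hsub]; push_cast [hcast]; linarith [hgood.2]
    · rw [hsub]; push_cast [hcast2]; linarith [hgood.2]
    · rw [hsub]; push_cast [hcast2]; linarith [hgood.1]
end
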